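/- Let Λ = (Λ_{ij}) be an n×n symmetric positive definite matrix with eigenvalue-based elementary symmetric curvature functions, and let κ' denote the eigenvalues of the (n-1)×(n-1) upper-left block (Λ_{αβ}), 1 ≤ α,β ≤ n-1. Define A_{m} = σ_{m}(κ') and B_m = σ_m(κ') - Σ_{γ=1}^{n-1} σ_{m-2}(κ'|γ) Λ_{γn}^2. If A_{n-k-1}Λ_{nn} + B_{n-k} > 0, then σ_{n-1}(κ')/σ_{n-k-1}(κ') ≥ (A_{n-1}Λ_{nn} + B_n)/(A_{n-k-1}Λ_{nn} + B_{n-k}). -/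

import Mathlib

/-!
Clearing denominators, the inequality says `A_{m-1} B_n ≤ A_{n-1} B_m` with `m = n - k ≥ 2`.
With `P_γ = ∏_{i ≠ γ} κ'_i` one has `B_n = -Σ_γ P_γ Λ_{γn}²` and `A_{n-1} = κ'_γ P_γ`, so the
inequality follows termwise from `σ_{m-1}(κ') = σ_{m-1}(κ'|γ) + κ'_γ σ_{m-2}(κ'|γ)`, i.e.
`A_{n-1} σ_{m-2}(κ'|γ) ≤ A_{m-1} P_γ`, together with `A_{n-1} σ_m(κ') ≥ 0`.
-/

/-- The `j`-th elementary symmetric polynomial of `f` over the finite index set `s`. -/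
noncomputable def esymm {ι : Type*} [DecidableEq ι] (s : Finset ι) (f : ι → ℝ) (j : ℕ) : ℝ :=
  ∑ t ∈ s.powersetCard j, ∏ i ∈ t, f i

/-- Integer-indexed elementary symmetric polynomial, with `σ_j = 0` for `j < 0`. -/
noncomputable def esymmZ {ι : Type*} [DecidableEq ι] (s : Finset ι) (f : ι → ℝ) (j : ℤ) : ℝ :=
  if j < 0 then 0 else esymm s f j.toNat

/-- `A_m = σ_m(κ')`. -/
noncomputable def Afun {p : ℕ} (κ : Fin p → ℝ) (m : ℕ) : ℝ :=
  esymm Finset.univ κ m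

/-- `B_m = σ_m(κ') - Σ_γ σ_{m-2}(κ'|γ) Λ_{γn}²`. -/
noncomputable def Bfun {p : ℕ} (κ : Fin p → ℝ) (Λn : Fin p → ℝ) (m : ℕ) : ℝ :=
  esymm Finset.univ κ m -
    ∑ γ : Fin p, esymmZ (Finset.univ.erase γ) κ ((m : ℤ) - 2) * (Λn γ) ^ 2

open Finset

section Esymm

variable {ι : Type*} [DecidableEq ι]

lemma esymm_nonneg {s : Finset ι} {f : ι → ℝ} (hf : ∀ i ∈ s, 0 ≤ f i) (j : ℕ) :
    0 ≤ esymm s f j :=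
  sum_nonneg fun _ ht => prod_nonneg fun i hi => hf i ((mem_powersetCard.mp ht).1 hi)

lemma esymm_pos {s : Finset ι} {f : ι → ℝ} (hf : ∀ i ∈ s, 0 < f i) {j : ℕ} (hj : j ≤ #s) :
    0 < esymm s f j :=
  sum_pos (fun _ ht => prod_pos fun i hi => hf i ((mem_powersetCard.mp ht).1 hi))
    (powersetCard_nonempty.2 hj)

lemma esymm_eq_zero_of_card_lt {s : Finset ι} (f : ι → ℝ) {j : ℕ} (hj : #s < j) :
    esymm s f j = 0 := by
  rw [esymm, powersetCard_eq_empty.2 hj, sum_empty]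

lemma esymm_card (s : Finset ι) (f : ι → ℝ) : esymm s f #s = ∏ i ∈ s, f i := by
  rw [esymm, powersetCard_self, sum_singleton]

lemma esymm_insert {a : ι} {s : Finset ι} (ha : a ∉ s) (f : ι → ℝ) (j : ℕ) :
    esymm (insert a s) f (j + 1) = esymm s f (j + 1) + f a * esymm s f j := by
  have not_mem {t : Finset ι} (ht : t ∈ s.powersetCard j) : a ∉ t :=
    fun hat => ha ((mem_powersetCard.mp ht).1 hat)
  unfold esymm
  rw [powersetCard_succ_insert ha, sum_union, sum_image, mul_sum]
  · exact congrArg _ (sum_congr rfl fun t ht => prod_insert (not_mem ht))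
  · intro t ht u hu h
    rw [← erase_insert (not_mem ht), ← erase_insert (not_mem hu), h]
  · refine disjoint_left.2 fun t ht ht' => ?_
    obtain ⟨u, -, rfl⟩ := mem_image.mp ht'
    exact ha ((mem_powersetCard.mp ht).1 (mem_insert_self a u))

lemma esymm_succ_of_mem {a : ι} {s : Finset ι} (ha : a ∈ s) (f : ι → ℝ) (j : ℕ) :
    esymm s f (j + 1) = esymm (s.erase a) f (j + 1) + f a * esymm (s.erase a) f j := by
  conv_lhs => rw [← insert_erase ha]
  exact esymm_insert (notMem_erase a s) f j

lemma esymm_card_mul_esymm_erase_le {a : ι} {s : Finset ι} (ha : a ∈ s) {f : ι → ℝ}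
    (hf : ∀ i ∈ s, 0 ≤ f i) (j : ℕ) :
    esymm s f #s * esymm (s.erase a) f j ≤ esymm s f (j + 1) * ∏ i ∈ s.erase a, f i := by
  have hf' : ∀ i ∈ s.erase a, 0 ≤ f i := fun i hi => hf i (mem_of_mem_erase hi)
  have h := mul_nonneg (esymm_nonneg hf' (j + 1)) (prod_nonneg hf')
  rw [esymm_card, ← mul_prod_erase s f ha, esymm_succ_of_mem ha]
  linear_combination h

lemma esymmZ_natCast (s : Finset ι) (f : ι → ℝ) (j : ℕ) : esymmZ s f j = esymm s f j := by
  simp [esymmZ]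

end Esymm

section AB

variable {p : ℕ} (κ Λn : Fin p → ℝ)

lemma Bfun_add_two (j : ℕ) :
    Bfun κ Λn (j + 2) = esymm univ κ (j + 2) - ∑ γ, esymm (univ.erase γ) κ j * Λn γ ^ 2 := by
  simp only [Bfun, Nat.cast_add, Nat.cast_ofNat, add_sub_cancel_right, esymmZ_natCast]

lemma Bfun_card_succ : Bfun κ Λn (p + 1) = -∑ γ, (∏ i ∈ univ.erase γ, κ i) * Λn γ ^ 2 := by
  rw [Bfun, esymm_eq_zero_of_card_lt κ (by simp), zero_sub, neg_inj]
  refine sum_congr rfl fun γ _ => ?_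
  have hcard : #(univ.erase γ) = p - 1 := by simp
  have hγ := γ.pos
  rw [show ((p + 1 : ℕ) : ℤ) - 2 = ((p - 1 : ℕ) : ℤ) by omega, esymmZ_natCast, ← hcard,
    esymm_card]

variable {κ}

lemma Afun_pred_mul_Bfun_card_succ_le (hκ : ∀ i, 0 ≤ κ i) {m : ℕ} (hm : 2 ≤ m) :
    Afun κ (m - 1) * Bfun κ Λn (p + 1) ≤ Afun κ p * Bfun κ Λn m := by
  obtain ⟨j, rfl⟩ : ∃ j, m = j + 2 := ⟨m - 2, by omega⟩
  have hσ : 0 ≤ Afun κ p * esymm univ κ (j + 2) :=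
    mul_nonneg (esymm_nonneg (fun i _ => hκ i) p) (esymm_nonneg (fun i _ => hκ i) (j + 2))
  have htermwise : Afun κ p * ∑ γ, esymm (univ.erase γ) κ j * Λn γ ^ 2
      ≤ Afun κ (j + 1) * ∑ γ, (∏ i ∈ univ.erase γ, κ i) * Λn γ ^ 2 := by
    simp only [mul_sum, ← mul_assoc]
    refine sum_le_sum fun γ _ => mul_le_mul_of_nonneg_right ?_ (sq_nonneg _)
    simpa [Afun] using esymm_card_mul_esymm_erase_le (mem_univ γ) (fun i _ => hκ i) j
  rw [Bfun_card_succ, Bfun_add_two, show j + 2 - 1 = j + 1 from rfl]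
  linear_combination hσ + htermwise

end AB

theorem stmt1_general (n k : ℕ) (hn : 2 ≤ n) (hk' : k ≤ n - 2)
    (κ : Fin (n - 1) → ℝ) (hκ : ∀ i, 0 < κ i) (Λnn : ℝ) (Λn : Fin (n - 1) → ℝ)
    (hden : 0 < Afun κ (n - k - 1) * Λnn + Bfun κ Λn (n - k)) :
    Afun κ (n - 1) / Afun κ (n - k - 1)
      ≥ (Afun κ (n - 1) * Λnn + Bfun κ Λn n)
        / (Afun κ (n - k - 1) * Λnn + Bfun κ Λn (n - k)) := by
  have hA : 0 < Afun κ (n - k - 1) := esymm_pos (fun i _ => hκ i) (by rw [card_univ, Fintype.card_fin]; omega)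
  have key := Afun_pred_mul_Bfun_card_succ_le Λn (fun i => (hκ i).le) (m := n - k) (by omega)
  have hBn : Bfun κ Λn n = Bfun κ Λn (n - 1 + 1) := by congr 1; omega
  rw [ge_iff_le, div_le_div_iff₀ hden hA, hBn]
  linear_combination key

/-- If `Λ` is a symmetric positive definite matrix whose upper-left `(n-1)×(n-1)` block is
`diag(κ')` with `κ' > 0`, last diagonal entry `Λ_{nn}` and off-diagonal column `Λ_{γn}`, and if
`A_{n-k-1}Λ_{nn} + B_{n-k} > 0`, then
`σ_{n-1}(κ')/σ_{n-k-1}(κ') ≥ (A_{n-1}Λ_{nn} + B_n)/(A_{n-k-1}Λ_{nn} + B_{n-k})`. -/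
theorem stmt1 (n k : ℕ) (hn : 2 ≤ n) (hk : 1 ≤ k) (hk' : k ≤ n - 2)
    (κ : Fin (n - 1) → ℝ) (hκ : ∀ i, 0 < κ i) (Λnn : ℝ) (Λn : Fin (n - 1) → ℝ)
    (hPD : (Matrix.fromBlocks (Matrix.diagonal κ) (Matrix.of fun i (_ : Unit) => Λn i)
      (Matrix.of fun (_ : Unit) j => Λn j) (Matrix.of fun (_ : Unit) (_ : Unit) => Λnn)).PosDef)
    (hden : 0 < Afun κ (n - k - 1) * Λnn + Bfun κ Λn (n - k)) :
    Afun κ (n - 1) / Afun κ (n - k - 1)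
      ≥ (Afun κ (n - 1) * Λnn + Bfun κ Λn n)
        / (Afun κ (n - k - 1) * Λnn + Bfun κ Λn (n - k)) :=
  stmt1_general n k hn hk' κ hκ Λnn Λn hden
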